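/- (Proposition 5.2) An oriented graph is a local K-graph if and only if it is a K-graph. -/

import Mathlib

namespace PluralCuts

/-- The two horizontal directions: west and east. -/
inductive XDir : Type
  | W
  | E
deriving DecidableEq

/-- The two vertical directions: north and south. -/
inductive YDir : Type
  | N
  | S
deriving DecidableEq

/-- The other element of `{W, E}`. -/
def XDir.other : XDir → XDir
  | .W => .E
  | .E => .W

/-- A helper choosing between two values according to an `XDir`. -/
def pick {α : Type*} (w e : α) : XDir → α
  | .W => w
  | .E => e

/-- A digraph on (a finite set of) natural-number vertices: a finite set of
vertices together with a finite set of edges (ordered pairs). -/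
structure DG : Type where
  verts : Finset ℕ
  edges : Finset (ℕ × ℕ)

namespace DG

/-- `D` is an oriented graph: edges lie between vertices, the edge relation is
irreflexive and antisymmetric, and the vertex set is nonempty. -/
def IsOriented (D : DG) : Prop :=
  (∀ e ∈ D.edges, e.1 ∈ D.verts ∧ e.2 ∈ D.verts) ∧
  (∀ e ∈ D.edges, e.1 ≠ e.2) ∧
  (∀ a b : ℕ, (a, b) ∈ D.edges → (b, a) ∉ D.edges) ∧
  D.verts.Nonempty

/-- A `W`-vertex: no edge ends in it. -/
def isWVert (D : DG) (a : ℕ) : Prop := a ∈ D.verts ∧ ∀ b, (b, a) ∉ D.edges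

/-- An `E`-vertex: no edge begins in it. -/
def isEVert (D : DG) (a : ℕ) : Prop := a ∈ D.verts ∧ ∀ b, (a, b) ∉ D.edges

/-- An inner vertex: some edge ends in it and some edge begins in it. -/
def isInner (D : DG) (a : ℕ) : Prop :=
  a ∈ D.verts ∧ (∃ b, (b, a) ∈ D.edges) ∧ (∃ b, (a, b) ∈ D.edges)

/-- A `W`-edge: an edge beginning in a `W`-vertex. -/
def isWEdge (D : DG) (e : ℕ × ℕ) : Prop := e ∈ D.edges ∧ D.isWVert e.1

/-- An `E`-edge: an edge ending in an `E`-vertex. -/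
def isEEdge (D : DG) (e : ℕ × ℕ) : Prop := e ∈ D.edges ∧ D.isEVert e.2

/-- An `X`-edge, for `X ∈ {W, E}`. -/
def isXEdge (D : DG) : XDir → (ℕ × ℕ) → Prop
  | .W => D.isWEdge
  | .E => D.isEEdge

/-- An inner edge: it begins and ends in inner vertices. -/
def isInnerEdge (D : DG) (e : ℕ × ℕ) : Prop :=
  e ∈ D.edges ∧ D.isInner e.1 ∧ D.isInner e.2

/-- A functional `W`-edge `(a,b)`: `(a,c) ∈ D` implies `b = c`. -/
def funcWEdge (D : DG) (e : ℕ × ℕ) : Prop :=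
  D.isWEdge e ∧ ∀ c, (e.1, c) ∈ D.edges → c = e.2

/-- A functional `E`-edge `(b,a)`: `(c,a) ∈ D` implies `b = c`. -/
def funcEEdge (D : DG) (e : ℕ × ℕ) : Prop :=
  D.isEEdge e ∧ ∀ c, (c, e.2) ∈ D.edges → c = e.1

/-- `D` is `W`-`E`-functional: all its `W`-edges and `E`-edges are functional. -/
def WEFunctional (D : DG) : Prop :=
  (∀ e, D.isWEdge e → D.funcWEdge e) ∧ (∀ e, D.isEEdge e → D.funcEEdge e)

/-- Semi-adjacency: `(a,b)` or `(b,a)` is an edge. -/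
def semiAdj (D : DG) (a b : ℕ) : Prop := (a, b) ∈ D.edges ∨ (b, a) ∈ D.edges

/-- A semipath: a nonempty sequence of mutually distinct vertices in which any
two consecutive vertices are semi-adjacent. -/
def IsSemipath (D : DG) (l : List ℕ) : Prop :=
  l ≠ [] ∧ (∀ a ∈ l, a ∈ D.verts) ∧ l.Nodup ∧ l.Chain' D.semiAdj

/-- A path: a nonempty sequence of mutually distinct vertices in which
`(a_i, a_{i+1})` is an edge for consecutive vertices. -/
def IsPath (D : DG) (l : List ℕ) : Prop :=
  l ≠ [] ∧ (∀ a ∈ l, a ∈ D.verts) ∧ l.Nodup ∧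
    l.Chain' (fun a b => (a, b) ∈ D.edges)

/-- A semicycle: a sequence `a_1, ..., a_n` of vertices with `n ≥ 4`,
`a_1 = a_n`, `a_1, ..., a_{n-1}` mutually distinct, and consecutive vertices
semi-adjacent. -/
def IsSemicycle (D : DG) (l : List ℕ) : Prop :=
  4 ≤ l.length ∧ (∀ a ∈ l, a ∈ D.verts) ∧ l.head? = l.getLast? ∧
  l.dropLast.Nodup ∧ l.Chain' D.semiAdj

/-- `D` is weakly connected: every two vertices are joined by a semipath. -/
def WeaklyConnected (D : DG) : Prop :=
  ∀ a ∈ D.verts, ∀ b ∈ D.verts,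
    ∃ l, D.IsSemipath l ∧ l.head? = some a ∧ l.getLast? = some b

/-- `D` is asemicyclic: it has no semicycles. -/
def Asemicyclic (D : DG) : Prop := ∀ l, ¬ D.IsSemicycle l

/-- The cut `D_W[e_W - e_E]D_E`:
`(D_W - {e_W}) ∪ (D_E - {e_E}) ∪ {(e_W.1, e_E.2)}` on the union of the vertex
sets with `e_W.2` and `e_E.1` omitted. -/
def cut (DW DE : DG) (eW eE : ℕ × ℕ) : DG where
  verts := (DW.verts ∪ DE.verts) \ {eW.2, eE.1}
  edges := insert (eW.1, eE.2) ((DW.edges.erase eW) ∪ (DE.edges.erase eE))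

end DG

/-- The type of assignments of four distinguished edges `NW, SW, NE, SE`. -/
abbrev DistE : Type := YDir → XDir → ℕ × ℕ

/-- The type of labellings assigning to (inner) vertices four edges. -/
abbrev Lab : Type := ℕ → YDir → XDir → ℕ × ℕ

/-- `⟨D, ε⟩` is a basic K-graph: `D` is an oriented graph with a single inner
vertex `b`, all edges begin or end in `b`, every other vertex is joined to `b`
by an edge, there is at least one edge ending in `b` and one beginning in `b`,
the distinguished edges `ε Y W` end in `b` and `ε Y E` begin in `b`, and
(XYB): if there are at least two `X`-edges then `NX ≠ SX`. -/
def IsBasicK (D : DG) (ε : DistE) : Prop :=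
  D.IsOriented ∧
  ∃ b ∈ D.verts,
    (∀ e ∈ D.edges, e.1 = b ∨ e.2 = b) ∧
    (∀ v ∈ D.verts, v = b ∨ (v, b) ∈ D.edges ∨ (b, v) ∈ D.edges) ∧
    (∃ a, (a, b) ∈ D.edges) ∧ (∃ c, (b, c) ∈ D.edges) ∧
    (∀ Y : YDir, ε Y XDir.W ∈ D.edges ∧ (ε Y XDir.W).2 = b ∧
      ε Y XDir.E ∈ D.edges ∧ (ε Y XDir.E).1 = b) ∧
    (2 ≤ (D.edges.filter (fun e => e.2 = b)).card →
      ε YDir.N XDir.W ≠ ε YDir.S XDir.W) ∧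
    (2 ≤ (D.edges.filter (fun e => e.1 = b)).card →
      ε YDir.N XDir.E ≠ ε YDir.S XDir.E)

/-- `⟨D, ε⟩` is a basic Q-graph: as a basic K-graph but with no requirement
(XYB) on the distinguished edges. -/
def IsBasicQ (D : DG) (ε : DistE) : Prop :=
  D.IsOriented ∧
  ∃ b ∈ D.verts,
    (∀ e ∈ D.edges, e.1 = b ∨ e.2 = b) ∧
    (∀ v ∈ D.verts, v = b ∨ (v, b) ∈ D.edges ∨ (b, v) ∈ D.edges) ∧
    (∃ a, (a, b) ∈ D.edges) ∧ (∃ c, (b, c) ∈ D.edges) ∧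
    (∀ Y : YDir, ε Y XDir.W ∈ D.edges ∧ (ε Y XDir.W).2 = b ∧
      ε Y XDir.E ∈ D.edges ∧ (ε Y XDir.E).1 = b)

/-- Finite binary trees whose nodes carry an oriented graph, four
distinguished edges, and (at internal nodes) the two cut edges. -/
inductive CTree : Type
  | leaf (D : DG) (ε : DistE)
  | node (D : DG) (ε : DistE) (eW eE : ℕ × ℕ) (l r : CTree)

namespace CTree

/-- The graph at the root of the tree. -/
def rootGraph : CTree → DG
  | .leaf D _ => D
  | .node D _ _ _ _ _ => D

/-- The distinguished edges at the root of the tree. -/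
def dist : CTree → DistE
  | .leaf _ ε => ε
  | .node _ ε _ _ _ _ => ε

/-- The list of graphs-with-distinguished-edges at the leaves of the tree
(the basic K-graphs determining the leaves of a construction). -/
def leaves : CTree → List (DG × DistE)
  | .leaf D ε => [(D, ε)]
  | .node _ _ _ _ l r => l.leaves ++ r.leaves

end CTree

/-- The tree `G_W[e_W - e_E]G_E`, whose root graph is the cut of the root
graphs and whose distinguished edges are given by (XYD). -/
def mkNode (GW GE : CTree) (eW eE : ℕ × ℕ) : CTree :=
  .node (DG.cut GW.rootGraph GE.rootGraph eW eE)
    (fun Y X =>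
      match X with
      | .W => if eE = GE.dist Y XDir.W then GW.dist Y XDir.W else GE.dist Y XDir.W
      | .E => if eW = GW.dist Y XDir.E then GE.dist Y XDir.E else GW.dist Y XDir.E)
    eW eE GW GE

/-- The inductive notion of construction (of a global K-graph). -/
inductive IsConstruction : CTree → Prop
  | leaf (D : DG) (ε : DistE) (h : IsBasicK D ε) : IsConstruction (.leaf D ε)
  | node (D : DG) (ε : DistE) (eW eE : ℕ × ℕ) (GW GE : CTree)
      (hW : IsConstruction GW) (hE : IsConstruction GE)
      (hdisj : Disjoint GW.rootGraph.verts GE.rootGraph.verts)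
      (heW : GW.rootGraph.funcEEdge eW)
      (heE : GE.rootGraph.funcWEdge eE)
      (hD : D = DG.cut GW.rootGraph GE.rootGraph eW eE)
      (hXYC : ∀ Y : YDir, eW = GW.dist Y XDir.E ∨ eE = GE.dist Y XDir.W)
      (hεW : ∀ Y : YDir, ε Y XDir.W =
        if eE = GE.dist Y XDir.W then GW.dist Y XDir.W else GE.dist Y XDir.W)
      (hεE : ∀ Y : YDir, ε Y XDir.E =
        if eW = GW.dist Y XDir.E then GE.dist Y XDir.E else GW.dist Y XDir.E) :
      IsConstruction (.node D ε eW eE GW GE)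

/-- The inductive notion of construction of a global Q-graph: as
`IsConstruction` but with basic Q-graphs at the leaves. -/
inductive IsConstructionQ : CTree → Prop
  | leaf (D : DG) (ε : DistE) (h : IsBasicQ D ε) : IsConstructionQ (.leaf D ε)
  | node (D : DG) (ε : DistE) (eW eE : ℕ × ℕ) (GW GE : CTree)
      (hW : IsConstructionQ GW) (hE : IsConstructionQ GE)
      (hdisj : Disjoint GW.rootGraph.verts GE.rootGraph.verts)
      (heW : GW.rootGraph.funcEEdge eW)
      (heE : GE.rootGraph.funcWEdge eE)
      (hD : D = DG.cut GW.rootGraph GE.rootGraph eW eE)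
      (hXYC : ∀ Y : YDir, eW = GW.dist Y XDir.E ∨ eE = GE.dist Y XDir.W)
      (hεW : ∀ Y : YDir, ε Y XDir.W =
        if eE = GE.dist Y XDir.W then GW.dist Y XDir.W else GE.dist Y XDir.W)
      (hεE : ∀ Y : YDir, ε Y XDir.E =
        if eW = GW.dist Y XDir.E then GE.dist Y XDir.E else GW.dist Y XDir.E) :
      IsConstructionQ (.node D ε eW eE GW GE)

/-- ρ-equivalence of constructions: the least equivalence relation containing
ρ1, ρ2, ρ3 and closed under congruence with respect to cuts. -/
inductive RhoEquiv : CTree → CTree → Prop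
  | rho1 (P Q R : CTree) (eW eE fW fE : ℕ × ℕ)
      (hP : IsConstruction P) (hQ : IsConstruction Q) (hR : IsConstruction R)
      (heW : P.rootGraph.isEEdge eW) (hfW : Q.rootGraph.isEEdge fW)
      (heE : Q.rootGraph.isWEdge eE) (hfE : R.rootGraph.isWEdge fE)
      (h1 : IsConstruction (mkNode (mkNode P Q eW eE) R fW fE))
      (h2 : IsConstruction (mkNode P (mkNode Q R fW fE) eW eE)) :
      RhoEquiv (mkNode (mkNode P Q eW eE) R fW fE)
               (mkNode P (mkNode Q R fW fE) eW eE)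
  | rho2 (P Q R : CTree) (eW eE fW fE : ℕ × ℕ)
      (hP : IsConstruction P) (hQ : IsConstruction Q) (hR : IsConstruction R)
      (heW : P.rootGraph.isEEdge eW) (hfW : P.rootGraph.isEEdge fW)
      (hne : eW ≠ fW)
      (heE : Q.rootGraph.isWEdge eE) (hfE : R.rootGraph.isWEdge fE)
      (h1 : IsConstruction (mkNode (mkNode P Q eW eE) R fW fE))
      (h2 : IsConstruction (mkNode (mkNode P R fW fE) Q eW eE)) :
      RhoEquiv (mkNode (mkNode P Q eW eE) R fW fE)
               (mkNode (mkNode P R fW fE) Q eW eE)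
  | rho3 (P Q R : CTree) (eW eE fW fE : ℕ × ℕ)
      (hP : IsConstruction P) (hQ : IsConstruction Q) (hR : IsConstruction R)
      (heE : P.rootGraph.isWEdge eE) (hfE : P.rootGraph.isWEdge fE)
      (hne : eE ≠ fE)
      (heW : Q.rootGraph.isEEdge eW) (hfW : R.rootGraph.isEEdge fW)
      (h1 : IsConstruction (mkNode R (mkNode Q P eW eE) fW fE))
      (h2 : IsConstruction (mkNode Q (mkNode R P fW fE) eW eE)) :
      RhoEquiv (mkNode R (mkNode Q P eW eE) fW fE)
               (mkNode Q (mkNode R P fW fE) eW eE)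
  | congr (G1 G2 H1 H2 : CTree) (eW eE : ℕ × ℕ)
      (h12 : RhoEquiv G1 G2) (h34 : RhoEquiv H1 H2)
      (hc1 : IsConstruction (mkNode G1 H1 eW eE))
      (hc2 : IsConstruction (mkNode G2 H2 eW eE)) :
      RhoEquiv (mkNode G1 H1 eW eE) (mkNode G2 H2 eW eE)
  | refl (G : CTree) (h : IsConstruction G) : RhoEquiv G G
  | symm {G H : CTree} (h : RhoEquiv G H) : RhoEquiv H G
  | trans {G H K : CTree} (h1 : RhoEquiv G H) (h2 : RhoEquiv H K) :
      RhoEquiv G K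

/-- The class `[G]`: all constructions with the same root graph as `G` whose
leaves are determined by the same basic K-graphs as those of `G`. -/
def classOf (G : CTree) : Set CTree :=
  {H | IsConstruction H ∧ H.rootGraph = G.rootGraph ∧
    ∀ p : DG × DistE, p ∈ H.leaves ↔ p ∈ G.leaves}

/-- Renaming the vertices of a digraph along a function. -/
def DG.rename (f : ℕ → ℕ) (D : DG) : DG where
  verts := D.verts.image f
  edges := D.edges.image (fun e => (f e.1, f e.2))

/-- Renaming the vertices throughout a tree. -/
def CTree.rename (f : ℕ → ℕ) : CTree → CTree
  | .leaf D ε => .leaf (DG.rename f D) (fun Y X => (f (ε Y X).1, f (ε Y X).2))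
  | .node D ε eW eE l r =>
      .node (DG.rename f D) (fun Y X => (f (ε Y X).1, f (ε Y X).2))
        (f eW.1, f eW.2) (f eE.1, f eE.2) (l.rename f) (r.rename f)

/-- σ-equivalence: `H` is obtained from `G` by a bijective renaming of
vertices that fixes the root vertices (so only secondary vertices may be
renamed). -/
def SigmaEquiv (G H : CTree) : Prop :=
  ∃ f : ℕ ≃ ℕ, (∀ v ∈ G.rootGraph.verts, f v = v) ∧ H = G.rename f

/-- The global compass graph `‖G‖`: all constructions σ-equivalent to a
construction in `[G]`. -/
def normClass (G : CTree) : Set CTree :=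
  {H | ∃ K ∈ classOf G, SigmaEquiv K H}

/-- The labelling `L` of `λ(G) = ⟨D, L⟩`, defined by induction on `G`: at a
leaf given by a basic K-graph with inner vertex `b`, `YX(b) = YX(B)`; at a
node, the value is inherited from the appropriate subtree unless it is one of
the two cut edges, in which case it is the new edge introduced by the cut. -/
def lamG : CTree → Lab
  | .leaf _ ε => fun _ => ε
  | .node _ _ eW eE l r => fun a Y X =>
      let v := if a ∈ l.rootGraph.verts then lamG l a Y X else lamG r a Y X
      if v = eW ∨ v = eE then (eW.1, eE.2) else v

/-- `L` assigns to every inner vertex `a` edges `L a Y W` ending in `a` and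
edges `L a Y E` beginning in `a`. -/
def ProperLab (D : DG) (L : Lab) : Prop :=
  ∀ a, D.isInner a → ∀ Y : YDir,
    L a Y XDir.W ∈ D.edges ∧ (L a Y XDir.W).2 = a ∧
    L a Y XDir.E ∈ D.edges ∧ (L a Y XDir.E).1 = a

/-- `⟨D, L⟩` separates `N` from `S`. -/
def SeparatesNS (D : DG) (L : Lab) : Prop :=
  ∀ a, D.isInner a →
    (2 ≤ (D.edges.filter (fun e => e.2 = a)).card →
      L a YDir.N XDir.W ≠ L a YDir.S XDir.W) ∧
    (2 ≤ (D.edges.filter (fun e => e.1 = a)).card →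
      L a YDir.N XDir.E ≠ L a YDir.S XDir.E)

/-- A list `a_1, ..., a_n` is `Y`-decent in `⟨D, L⟩`: `n = 1`, or
`YE(a_1) = (a_1, a_2)`, or `YW(a_n) = (a_{n-1}, a_n)`. -/
def Ydecent (L : Lab) (Y : YDir) (l : List ℕ) : Prop :=
  ∀ a b t, l = a :: b :: t →
    (L a Y XDir.E = (a, b) ∨
      ∃ c d t', l.reverse = d :: c :: t' ∧ L d Y XDir.W = (c, d))

/-- `⟨D, L⟩` is a local compass graph. -/
def IsLocalCompass (D : DG) (L : Lab) : Prop :=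
  D.IsOriented ∧ ProperLab D L ∧
  D.WeaklyConnected ∧ D.Asemicyclic ∧ D.WEFunctional ∧ (∃ a, D.isInner a) ∧
  SeparatesNS D L ∧
  (∀ l, D.IsPath l → Ydecent L YDir.N l ∧ Ydecent L YDir.S l)

/-- A path (list) covers an edge `g` when `g` is a pair of consecutive
vertices of the list. -/
def covers (l : List ℕ) (g : ℕ × ℕ) : Prop := g ∈ l.zip l.tail

/-- A `YX`-edge in `⟨D, L⟩`. -/
def YXedge (D : DG) (L : Lab) (Y : YDir) : XDir → (ℕ × ℕ) → Prop
  | .W, g => g ∈ D.edges ∧ (L g.2 Y XDir.W = g ∨ D.isEEdge g)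
  | .E, g => g ∈ D.edges ∧ (L g.1 Y XDir.E = g ∨ D.isWEdge g)

/-- A proper semipath: a semipath such that neither it nor its reverse is a
path. -/
def ProperSemipath (D : DG) (l : List ℕ) : Prop :=
  D.IsSemipath l ∧ ¬ D.IsPath l ∧ ¬ D.IsPath l.reverse

/-- A transversal edge `(a,b)`: there is a proper semipath beginning with
`a, b` and a proper semipath beginning with `b, a`. -/
def Transversal (D : DG) (e : ℕ × ℕ) : Prop :=
  e ∈ D.edges ∧
  (∃ t, ProperSemipath D (e.1 :: e.2 :: t)) ∧
  (∃ t, ProperSemipath D (e.2 :: e.1 :: t))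

/-- The edge of `D` that connects two semi-adjacent vertices `a` and `b`. -/
def connEdge (D : DG) (a b : ℕ) : ℕ × ℕ :=
  if (a, b) ∈ D.edges then (a, b) else (b, a)

/-- The connecting edges of a list: the edges connecting its consecutive
vertices. -/
def connEdges (D : DG) (l : List ℕ) (e : ℕ × ℕ) : Prop :=
  ∃ p ∈ l.zip l.tail, e = connEdge D p.1 p.2

/-- A bifurcation: three distinct edges with a common vertex. -/
def Bifurcation (D : DG) (e1 e2 e3 : ℕ × ℕ) : Prop :=
  e1 ∈ D.edges ∧ e2 ∈ D.edges ∧ e3 ∈ D.edges ∧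
  e1 ≠ e2 ∧ e1 ≠ e3 ∧ e2 ≠ e3 ∧
  ∃ v, (v = e1.1 ∨ v = e1.2) ∧ (v = e2.1 ∨ v = e2.2) ∧ (v = e3.1 ∨ v = e3.2)

/-- A K-graph: a weakly connected, asemicyclic, `W`-`E`-functional oriented
graph with an inner vertex in which no bifurcation is transversal. -/
def IsKGraph (D : DG) : Prop :=
  D.IsOriented ∧ D.WeaklyConnected ∧ D.Asemicyclic ∧ D.WEFunctional ∧
  (∃ a, D.isInner a) ∧
  ∀ e1 e2 e3, Bifurcation D e1 e2 e3 →
    ¬ (Transversal D e1 ∧ Transversal D e2 ∧ Transversal D e3)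

/-- A Q-graph: a weakly connected, asemicyclic, `W`-`E`-functional oriented
graph with an inner vertex. -/
def IsQGraph (D : DG) : Prop :=
  D.IsOriented ∧ D.WeaklyConnected ∧ D.Asemicyclic ∧ D.WEFunctional ∧
  ∃ a, D.isInner a


/-!
Call `v` a fork if two edges begin in `v`, and a join if two edges end in `v`. In an
asemicyclic graph an edge is transversal exactly when a walk leads to it from a fork and from
it to a join: the first place where a proper semipath turns against the edges is a fork or a
join, and conversely a second edge at the fork or join of such a walk
turns it into a proper semipath.

In a local compass graph consider a walk from a fork to a join. By separation one of the two
labels at the fork misses the first edge, so by decency the same label at the join is the last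
edge, and then the other label at the join misses it. Chasing this, every transversal edge
beginning (ending) in `m` is an `E`-label (`W`-label) of `m`, and a transversal edge ending in
`m` forces all transversal edges beginning in `m` to be the same label, and dually. Hence no
three transversal edges meet.

Conversely, in a K-graph at most two transversal edges meet at any vertex, so, the graph being
asemicyclic, the transversal edges can be coloured `N` and `S` with equal colours on edges
meeting head to tail and different colours on edges with a common tail or a common head. Let
the `Y`-labels of a vertex be its transversal edges of colour `Y` (`E`) and of the other colour
(`W`), completed so as to separate `N` from `S`. A path beginning in a non-fork or ending in a
non-join is decent because its end label is forced; a path from a fork to a join consists of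
transversal edges of one colour, and is decent by the choice of labels.
-/

open Relation

def YDir.other : YDir → YDir
  | .N => .S
  | .S => .N

namespace YDir

lemma other_ne (Y : YDir) : Y.other ≠ Y := by
  cases Y <;> simp [other]

lemma other_inj {Y Y' : YDir} : Y.other = Y'.other ↔ Y = Y' := by
  cases Y <;> cases Y' <;> simp [other]

lemma eq_or_eq_other (Y c : YDir) : Y = c ∨ Y = c.other := by
  cases Y <;> cases c <;> simp [other]

lemma eq_or_eq_or_eq (Y₁ Y₂ Y₃ : YDir) : Y₁ = Y₂ ∨ Y₁ = Y₃ ∨ Y₂ = Y₃ := by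
  cases Y₁ <;> cases Y₂ <;> cases Y₃ <;> simp

end YDir

lemma exists_reverse_eq_cons_cons {α : Type*} (a b : α) (t : List α) :
    ∃ d c t', (a :: b :: t).reverse = d :: c :: t' := by
  rcases h : (a :: b :: t).reverse with _ | ⟨d, _ | ⟨c, t'⟩⟩
  all_goals have := congrArg List.length h; simp at this
  exact ⟨d, c, t', rfl⟩

namespace DG

variable {D : DG} {a b : ℕ} {l : List ℕ}

lemma IsOriented.ne (hor : D.IsOriented) (h : (a, b) ∈ D.edges) : a ≠ b :=
  hor.2.1 _ h

lemma IsOriented.fst_mem (hor : D.IsOriented) (h : (a, b) ∈ D.edges) : a ∈ D.verts :=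
  (hor.1 _ h).1

lemma IsOriented.snd_mem (hor : D.IsOriented) (h : (a, b) ∈ D.edges) : b ∈ D.verts :=
  (hor.1 _ h).2

lemma IsOriented.not_mem_swap (hor : D.IsOriented) (h : (a, b) ∈ D.edges) :
    (b, a) ∉ D.edges :=
  hor.2.2.1 a b h

lemma IsOriented.ne_of_semiAdj (hor : D.IsOriented) (h : D.semiAdj a b) : a ≠ b :=
  h.elim hor.ne fun h => (hor.ne h).symm

lemma IsOriented.isPath_pair (hor : D.IsOriented) (h : (a, b) ∈ D.edges) : D.IsPath [a, b] :=
  ⟨by simp, by simp [hor.fst_mem h, hor.snd_mem h], by simp [hor.ne h], List.isChain_pair.2 h⟩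

lemma IsPath.isSemipath (h : D.IsPath l) : D.IsSemipath l :=
  ⟨h.1, h.2.1, h.2.2.1, h.2.2.2.imp fun _ _ => Or.inl⟩

lemma IsSemipath.isPath (h : D.IsSemipath l) (hc : l.IsChain fun a b => (a, b) ∈ D.edges) :
    D.IsPath l :=
  ⟨h.1, h.2.1, h.2.2.1, hc⟩

lemma IsSemipath.tail (h : D.IsSemipath (a :: l)) (hl : l ≠ []) : D.IsSemipath l :=
  ⟨hl, fun x hx => h.2.1 x (List.mem_cons_of_mem a hx), (List.nodup_cons.1 h.2.2.1).2,
    h.2.2.2.tail⟩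

lemma IsSemipath.reverse (h : D.IsSemipath l) : D.IsSemipath l.reverse :=
  ⟨by simpa using h.1, by simpa using h.2.1, List.nodup_reverse.2 h.2.2.1,
    List.isChain_reverse.2 (h.2.2.2.imp fun _ _ h => h.symm)⟩

lemma IsSemipath.length_le (h : D.IsSemipath l) : l.length ≤ D.verts.card := by
  classical
  rw [← List.toFinset_card_of_nodup h.2.2.1]
  exact Finset.card_le_card fun x hx => h.2.1 x (List.mem_toFinset.1 hx)

/-- If `z` already lay on the semipath, it would close a semicycle. -/
lemma Asemicyclic.isSemipath_cons (hasem : D.Asemicyclic) (hor : D.IsOriented) {y z : ℕ}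
    {t : List ℕ} (h : D.IsSemipath (y :: t)) (hzy : D.semiAdj z y) (hz : t.head? ≠ some z) :
    D.IsSemipath (z :: y :: t) := by
  have hzv : z ∈ D.verts := hzy.elim hor.fst_mem hor.snd_mem
  have hzt : z ∉ t := by
    intro hmem
    obtain ⟨t₁, t₂, rfl⟩ := List.append_of_mem hmem
    have ht₁ : t₁ ≠ [] := by rintro rfl; exact hz rfl
    have hnd := h.2.2.1
    rw [← List.cons_append, List.nodup_append] at hnd
    have hch : (y :: t₁ ++ [z]).IsChain D.semiAdj := by
      have := h.2.2.2
      rw [← List.cons_append, show z :: t₂ = [z] ++ t₂ from rfl, ← List.append_assoc] at this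
      exact (List.isChain_append.1 this).1
    refine hasem (z :: (y :: t₁ ++ [z])) ⟨?_, ?_, ?_, ?_, ?_⟩
    · simpa [Nat.succ_le_iff, List.length_pos_iff] using ht₁
    · intro x hx
      simp only [List.cons_append, List.mem_cons, List.mem_append,
        List.not_mem_nil, or_false] at hx
      rcases hx with rfl | rfl | hx | rfl
      · exact hzv
      · exact h.2.1 _ List.mem_cons_self
      · exact h.2.1 x (by simp [hx])
      · exact hzv
    · show some z = ((z :: y :: t₁) ++ [z]).getLast?
      rw [List.getLast?_concat]
    · rw [← List.cons_append, List.dropLast_concat]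
      exact List.nodup_cons.2 ⟨fun hm => hnd.2.2 z hm z (by simp) rfl, hnd.1⟩
    · exact List.isChain_cons_cons.2 ⟨hzy, hch⟩
  refine ⟨List.cons_ne_nil _ _, ?_, List.nodup_cons.2 ⟨?_, h.2.2.1⟩,
    List.isChain_cons_cons.2 ⟨hzy, h.2.2.2⟩⟩
  · intro x hx
    rcases List.mem_cons.1 hx with rfl | hx
    exacts [hzv, h.2.1 x hx]
  · intro hm
    rcases List.mem_cons.1 hm with rfl | hm
    exacts [hor.ne_of_semiAdj hzy rfl, hzt hm]

lemma Asemicyclic.isPath_of_isChain (hasem : D.Asemicyclic) (hor : D.IsOriented) :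
    ∀ {a b : ℕ} {t : List ℕ}, (a :: b :: t).IsChain (fun x y => (x, y) ∈ D.edges) →
      D.IsPath (a :: b :: t)
  | a, b, [], h => hor.isPath_pair (List.isChain_pair.1 h)
  | a, b, c :: t, h => by
    obtain ⟨hab, hc⟩ := List.isChain_cons_cons.1 h
    have hbc : (b, c) ∈ D.edges := (List.isChain_cons_cons.1 hc).1
    refine (hasem.isSemipath_cons hor (hasem.isPath_of_isChain hor hc).isSemipath
      (Or.inl hab) ?_).isPath h
    rintro ⟨⟩
    exact hor.not_mem_swap hab hbc

/-- Walks are recorded by their edges: `ReflTransGen D.NextEdge e f` is a walk whose first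
edge is `e` and whose last edge is `f`. -/
def NextEdge (D : DG) (e f : ℕ × ℕ) : Prop := f ∈ D.edges ∧ e.2 = f.1

variable {e f g : ℕ × ℕ}

lemma mem_of_walk (he : e ∈ D.edges) (hw : ReflTransGen D.NextEdge e f) : f ∈ D.edges := by
  induction hw with
  | refl => exact he
  | tail _ hs => exact hs.1

lemma Asemicyclic.exists_isPath_of_walk (hasem : D.Asemicyclic) (hor : D.IsOriented)
    (he : e ∈ D.edges) (hw : ReflTransGen D.NextEdge e f) :
    ∃ t t', D.IsPath (e.1 :: e.2 :: t) ∧ (e.1 :: e.2 :: t).reverse = f.2 :: f.1 :: t' := by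
  suffices ∃ t t', (e.1 :: e.2 :: t).IsChain (fun x y => (x, y) ∈ D.edges) ∧
      (e.1 :: e.2 :: t).reverse = f.2 :: f.1 :: t' by
    obtain ⟨t, t', hc, hr⟩ := this
    exact ⟨t, t', hasem.isPath_of_isChain hor hc, hr⟩
  induction hw with
  | refl => exact ⟨[], [], List.isChain_pair.2 he, rfl⟩
  | @tail f g _ hs ih =>
    obtain ⟨t, t', hc, hr⟩ := ih
    refine ⟨t ++ [g.2], f.1 :: t', ?_, ?_⟩
    · have hlast : (e.1 :: e.2 :: t).getLast? = some f.2 := by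
        rw [← List.head?_reverse, hr]; rfl
      rw [← List.cons_append, ← List.cons_append]
      refine hc.append (List.isChain_singleton _) ?_
      simp only [hlast, Option.mem_def, Option.some.injEq, List.head?_cons]
      rintro _ rfl _ rfl
      rw [hs.2]
      exact hs.1
    · rw [← List.cons_append, ← List.cons_append, List.reverse_append, hr, hs.2]
      rfl

lemma walk_of_isPath : ∀ {t : List ℕ} {a b c d : ℕ} {t' : List ℕ}, D.IsPath (a :: b :: t) →
    (a :: b :: t).reverse = d :: c :: t' → ReflTransGen D.NextEdge (a, b) (c, d)
  | [], a, b, c, d, t', _, hr => by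
    simp only [List.reverse_cons, List.reverse_nil, List.nil_append, List.cons_append,
      List.cons.injEq] at hr
    obtain ⟨rfl, rfl, -⟩ := hr
    exact .refl
  | x :: t, a, b, c, d, t', hp, hr => by
    obtain ⟨d', c', r, hr'⟩ := exists_reverse_eq_cons_cons b x t
    rw [List.reverse_cons, hr'] at hr
    simp only [List.cons_append, List.cons.injEq] at hr
    obtain ⟨rfl, rfl, -⟩ := hr
    have hbx : (b, x) ∈ D.edges := (List.isChain_cons_cons.1 hp.2.2.2.tail).1
    exact .head ⟨hbx, rfl⟩ (walk_of_isPath ⟨by simp, fun y hy => hp.2.1 y (by simp [hy]),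
      (List.nodup_cons.1 hp.2.2.1).2, hp.2.2.2.tail⟩ hr')

variable {v w : ℕ}

def IsFork (D : DG) (v : ℕ) : Prop :=
  ∃ u₁ u₂, u₁ ≠ u₂ ∧ (v, u₁) ∈ D.edges ∧ (v, u₂) ∈ D.edges

def IsJoin (D : DG) (w : ℕ) : Prop :=
  ∃ u₁ u₂, u₁ ≠ u₂ ∧ (u₁, w) ∈ D.edges ∧ (u₂, w) ∈ D.edges

def FedByFork (D : DG) (e : ℕ × ℕ) : Prop :=
  ∃ g ∈ D.edges, D.IsFork g.1 ∧ ReflTransGen D.NextEdge g e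

def FeedsJoin (D : DG) (e : ℕ × ℕ) : Prop :=
  e ∈ D.edges ∧ ∃ g, D.IsJoin g.2 ∧ ReflTransGen D.NextEdge e g

lemma IsFork.exists_ne (h : D.IsFork v) (x : ℕ) : ∃ u, (v, u) ∈ D.edges ∧ u ≠ x := by
  obtain ⟨u₁, u₂, hu, h₁, h₂⟩ := h
  exact (hu.ne_or_ne x).elim (⟨u₁, h₁, ·⟩) (⟨u₂, h₂, ·⟩)

lemma IsJoin.exists_ne (h : D.IsJoin w) (x : ℕ) : ∃ u, (u, w) ∈ D.edges ∧ u ≠ x := by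
  obtain ⟨u₁, u₂, hu, h₁, h₂⟩ := h
  exact (hu.ne_or_ne x).elim (⟨u₁, h₁, ·⟩) (⟨u₂, h₂, ·⟩)

lemma IsFork.isInner (h : D.IsFork v) (hor : D.IsOriented) (hwef : D.WEFunctional) :
    D.isInner v := by
  obtain ⟨u₁, u₂, hu, h₁, h₂⟩ := h
  refine ⟨hor.fst_mem h₁, ?_, u₁, h₁⟩
  by_contra! hW
  exact hu ((hwef.1 (v, u₁) ⟨h₁, hor.fst_mem h₁, hW⟩).2 u₂ h₂).symm

lemma IsJoin.isInner (h : D.IsJoin w) (hor : D.IsOriented) (hwef : D.WEFunctional) :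
    D.isInner w := by
  obtain ⟨u₁, u₂, hu, h₁, h₂⟩ := h
  refine ⟨hor.snd_mem h₁, ⟨u₁, h₁⟩, ?_⟩
  by_contra! hE
  exact hu ((hwef.2 (u₁, w) ⟨h₁, hor.snd_mem h₁, hE⟩).2 u₂ h₂).symm

lemma IsFork.two_le_card (h : D.IsFork v) : 2 ≤ (D.edges.filter fun e => e.1 = v).card := by
  obtain ⟨u₁, u₂, hu, h₁, h₂⟩ := h
  exact Finset.one_lt_card.2 ⟨(v, u₁), Finset.mem_filter.2 ⟨h₁, rfl⟩, (v, u₂),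
    Finset.mem_filter.2 ⟨h₂, rfl⟩, fun h => hu (congrArg Prod.snd h)⟩

lemma IsJoin.two_le_card (h : D.IsJoin w) : 2 ≤ (D.edges.filter fun e => e.2 = w).card := by
  obtain ⟨u₁, u₂, hu, h₁, h₂⟩ := h
  exact Finset.one_lt_card.2 ⟨(u₁, w), Finset.mem_filter.2 ⟨h₁, rfl⟩, (u₂, w),
    Finset.mem_filter.2 ⟨h₂, rfl⟩, fun h => hu (congrArg Prod.fst h)⟩

lemma FedByFork.mem (h : D.FedByFork e) : e ∈ D.edges :=
  let ⟨_, hg, _, hw⟩ := h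
  mem_of_walk hg hw

lemma FedByFork.walk (h : D.FedByFork e) (hw : ReflTransGen D.NextEdge e f) : D.FedByFork f :=
  let ⟨g, hg, hv, hw'⟩ := h
  ⟨g, hg, hv, hw'.trans hw⟩

lemma FeedsJoin.of_walk (he : e ∈ D.edges) (hw : ReflTransGen D.NextEdge e f)
    (h : D.FeedsJoin f) : D.FeedsJoin e :=
  let ⟨_, g, hv, hw'⟩ := h
  ⟨he, g, hv, hw.trans hw'⟩

lemma feedsJoin_of_not_isPath : ∀ {t : List ℕ} {a b : ℕ}, (a, b) ∈ D.edges →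
    D.IsSemipath (a :: b :: t) → ¬ D.IsPath (a :: b :: t) → D.FeedsJoin (a, b)
  | [], _, _, hab, hs, hp => (hp (hs.isPath (List.isChain_pair.2 hab))).elim
  | c :: t, a, b, hab, hs, hp => by
    rcases (List.isChain_cons_cons.1 hs.2.2.2.tail).1 with hbc | hcb
    · by_cases hp' : D.IsPath (b :: c :: t)
      · exact (hp (hs.isPath (List.isChain_cons_cons.2 ⟨hab, hp'.2.2.2⟩))).elim
      · exact (feedsJoin_of_not_isPath hbc (hs.tail (List.cons_ne_nil _ _)) hp').of_walk hab
          (.single ⟨hbc, rfl⟩)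
    · have hac : a ≠ c := by
        rintro rfl
        simpa using hs.2.2.1
      exact ⟨hab, (a, b), ⟨a, c, hac, hab, hcb⟩, .refl⟩

lemma fedByFork_of_not_isPath_reverse : ∀ {s : List ℕ} {a b : ℕ}, (a, b) ∈ D.edges →
    D.IsSemipath (b :: a :: s) → ¬ D.IsPath (b :: a :: s).reverse → D.FedByFork (a, b)
  | [], _, _, hab, hs, hp =>
    (hp (hs.reverse.isPath (by simpa using hab))).elim
  | c :: s, a, b, hab, hs, hp => by
    rcases (List.isChain_cons_cons.1 hs.2.2.2.tail).1 with hac | hca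
    · have hbc : b ≠ c := by
        rintro rfl
        simpa using hs.2.2.1
      exact ⟨(a, b), hab, ⟨b, c, hbc, hab, hac⟩, .refl⟩
    · by_cases hp' : D.IsPath (a :: c :: s).reverse
      · refine (hp (hs.reverse.isPath (List.isChain_reverse.2 ?_))).elim
        exact List.isChain_cons_cons.2 ⟨hab, List.isChain_reverse.1 hp'.2.2.2⟩
      · exact (fedByFork_of_not_isPath_reverse hca (hs.tail (List.cons_ne_nil _ _)) hp').walk
          (.single ⟨hab, rfl⟩)

/-- Extend a path from `e` to a join `w` by a second edge ending in `w`. -/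
lemma FeedsJoin.exists_properSemipath (h : D.FeedsJoin e) (hor : D.IsOriented)
    (hasem : D.Asemicyclic) : ∃ t, ProperSemipath D (e.1 :: e.2 :: t) := by
  obtain ⟨he, g, hj, hw⟩ := h
  obtain ⟨t, t', hp, hr⟩ := hasem.exists_isPath_of_walk hor he hw
  obtain ⟨u, hu, hug⟩ := hj.exists_ne g.1
  have hs : D.IsSemipath (u :: g.2 :: g.1 :: t') :=
    hasem.isSemipath_cons hor (hr ▸ hp.isSemipath.reverse) (Or.inl hu) (by simpa using hug.symm)
  have hl : e.1 :: e.2 :: (t ++ [u]) = (u :: g.2 :: g.1 :: t').reverse := by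
    rw [List.reverse_cons, ← hr, List.reverse_reverse]; rfl
  refine ⟨t ++ [u], hl ▸ hs.reverse, fun hp' => ?_, fun hp' => ?_⟩
  · rw [hl] at hp'
    exact hor.not_mem_swap hu (List.isChain_cons_cons.1 (List.isChain_reverse.1 hp'.2.2.2)).1
  · rw [hl, List.reverse_reverse] at hp'
    exact hor.not_mem_swap (mem_of_walk he hw)
      (List.isChain_cons_cons.1 hp'.2.2.2.tail).1

/-- Extend a path from a fork `v` to `e` by a second edge beginning in `v`. -/
lemma FedByFork.exists_properSemipath (h : D.FedByFork e) (hor : D.IsOriented)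
    (hasem : D.Asemicyclic) : ∃ s, ProperSemipath D (e.2 :: e.1 :: s) := by
  obtain ⟨g, hg, hv, hw⟩ := h
  obtain ⟨t, t', hp, hr⟩ := hasem.exists_isPath_of_walk hor hg hw
  obtain ⟨u, hu, hug⟩ := hv.exists_ne g.2
  have hs : D.IsSemipath (u :: g.1 :: g.2 :: t) :=
    hasem.isSemipath_cons hor hp.isSemipath (Or.inr hu) (by simpa using hug.symm)
  have hl : e.2 :: e.1 :: (t' ++ [u]) = (u :: g.1 :: g.2 :: t).reverse := by
    rw [List.reverse_cons, hr]; rfl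
  refine ⟨t' ++ [u], hl ▸ hs.reverse, fun hp' => ?_, fun hp' => ?_⟩
  · exact hor.not_mem_swap (mem_of_walk hg hw) (List.isChain_cons_cons.1 hp'.2.2.2).1
  · rw [hl, List.reverse_reverse] at hp'
    exact hor.not_mem_swap hu (List.isChain_cons_cons.1 hp'.2.2.2).1

theorem transversal_iff (hor : D.IsOriented) (hasem : D.Asemicyclic) :
    Transversal D e ↔ D.FedByFork e ∧ D.FeedsJoin e :=
  ⟨fun ⟨he, ⟨_, ht⟩, ⟨_, hs⟩⟩ => ⟨fedByFork_of_not_isPath_reverse he hs.1 hs.2.2,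
    feedsJoin_of_not_isPath he ht.1 ht.2.1⟩, fun ⟨hF, hJ⟩ =>
    ⟨hF.mem, hJ.exists_properSemipath hor hasem, hF.exists_properSemipath hor hasem⟩⟩

end DG

namespace IsLocalCompass

open DG

variable {D : DG} {L : Lab} {v w m : ℕ} {e f g h e₁ e₂ e₃ : ℕ × ℕ} {Y : YDir}

lemma decent_of_walk (hL : IsLocalCompass D L) (he : e ∈ D.edges)
    (hw : ReflTransGen D.NextEdge e f) (Y : YDir) : L e.1 Y .E = e ∨ L f.2 Y .W = f := by
  obtain ⟨hor, -, -, hasem, -, -, -, hdec⟩ := hL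
  obtain ⟨t, t', hp, hr⟩ := hasem.exists_isPath_of_walk hor he hw
  have hY : Ydecent L Y (e.1 :: e.2 :: t) := by
    cases Y
    exacts [(hdec _ hp).1, (hdec _ hp).2]
  rcases hY _ _ _ rfl with h | ⟨c, d, t'', hr', h⟩
  · exact Or.inl h
  · rw [hr] at hr'
    simp only [List.cons.injEq] at hr'
    obtain ⟨rfl, rfl, -⟩ := hr'
    exact Or.inr h

lemma label_out_ne_other (hL : IsLocalCompass D L) (hv : D.IsFork v) (Y : YDir) :
    L v Y .E ≠ L v Y.other .E := by
  obtain ⟨hor, -, -, -, hwef, -, hsep, -⟩ := hL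
  have h := (hsep v (hv.isInner hor hwef)).2 hv.two_le_card
  cases Y
  exacts [h, h.symm]

lemma label_in_ne_other (hL : IsLocalCompass D L) (hw : D.IsJoin w) (Y : YDir) :
    L w Y .W ≠ L w Y.other .W := by
  obtain ⟨hor, -, -, -, hwef, -, hsep, -⟩ := hL
  have h := (hsep w (hw.isInner hor hwef)).1 hw.two_le_card
  cases Y
  exacts [h, h.symm]

lemma exists_label_out_ne (hL : IsLocalCompass D L) (hv : D.IsFork v) (g : ℕ × ℕ) :
    ∃ Y, L v Y .E ≠ g :=
  ((hL.label_out_ne_other hv .N).ne_or_ne g).elim (⟨_, ·⟩) (⟨_, ·⟩)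

lemma exists_label_in_ne (hL : IsLocalCompass D L) (hw : D.IsJoin w) (h : ℕ × ℕ) :
    ∃ Y, L w Y .W ≠ h :=
  ((hL.label_in_ne_other hw .N).ne_or_ne h).elim (⟨_, ·⟩) (⟨_, ·⟩)

lemma exists_label_out_eq (hL : IsLocalCompass D L) (he : D.FeedsJoin e) :
    ∃ Y, L e.1 Y .E = e := by
  obtain ⟨he, h, hj, hw⟩ := he
  obtain ⟨Y, hY⟩ := hL.exists_label_in_ne hj h
  exact ⟨Y, (hL.decent_of_walk he hw Y).resolve_right hY⟩

lemma exists_label_in_eq (hL : IsLocalCompass D L) (he : D.FedByFork e) :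
    ∃ Y, L e.2 Y .W = e := by
  obtain ⟨g, hg, hv, hw⟩ := he
  obtain ⟨Y, hY⟩ := hL.exists_label_out_ne hv g
  exact ⟨Y, (hL.decent_of_walk hg hw Y).resolve_left hY⟩

/-- If the `Y`-label misses the first edge `g` of a walk through `e` to a join, it must hit
the last edge there, so the other label at that join misses it and the other label at `e.1`
is `e`. -/
lemma label_out_other_eq (hL : IsLocalCompass D L) (hg : g ∈ D.edges)
    (hY : L g.1 Y .E ≠ g) (hw : ReflTransGen D.NextEdge g e) (he : D.FeedsJoin e) :
    L e.1 Y.other .E = e := by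
  obtain ⟨he, h, hj, hw'⟩ := he
  have h₁ : L h.2 Y .W = h := (hL.decent_of_walk hg (hw.trans hw') Y).resolve_left hY
  exact (hL.decent_of_walk he hw' Y.other).resolve_right fun h₂ =>
    hL.label_in_ne_other hj Y (h₁.trans h₂.symm)

lemma label_in_other_eq (hL : IsLocalCompass D L) (hY : L h.2 Y .W ≠ h)
    (hw : ReflTransGen D.NextEdge e h) (he : D.FedByFork e) :
    L e.2 Y.other .W = e := by
  obtain ⟨g, hg, hv, hw'⟩ := he
  have h₁ : L g.1 Y .E = g := (hL.decent_of_walk hg (hw'.trans hw) Y).resolve_right hY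
  exact (hL.decent_of_walk hg hw' Y.other).resolve_left fun h₂ =>
    hL.label_out_ne_other hv Y (h₁.trans h₂.symm)

lemma out_eq_of_fedByFork_in (hL : IsLocalCompass D L) (hf : D.FedByFork f)
    (he₁ : D.FeedsJoin e₁) (he₂ : D.FeedsJoin e₂) (h₁ : e₁.1 = f.2) (h₂ : e₂.1 = f.2) :
    e₁ = e₂ := by
  obtain ⟨g, hg, hv, hw⟩ := hf
  obtain ⟨Y, hY⟩ := hL.exists_label_out_ne hv g
  have key : ∀ e, D.FeedsJoin e → e.1 = f.2 → L f.2 Y.other .E = e := fun e he he₁ => by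
    rw [← he₁]
    exact hL.label_out_other_eq hg hY (hw.tail ⟨he.1, he₁.symm⟩) he
  exact (key e₁ he₁ h₁).symm.trans (key e₂ he₂ h₂)

lemma in_eq_of_feedsJoin_out (hL : IsLocalCompass D L) (he : D.FeedsJoin e)
    (hf₁ : D.FedByFork f₁) (hf₂ : D.FedByFork f₂) (h₁ : f₁.2 = e.1) (h₂ : f₂.2 = e.1) :
    f₁ = f₂ := by
  obtain ⟨he, h, hj, hw⟩ := he
  obtain ⟨Y, hY⟩ := hL.exists_label_in_ne hj h
  have key : ∀ f, D.FedByFork f → f.2 = e.1 → L e.1 Y.other .W = f := fun f hf hf₁ => by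
    rw [← hf₁]
    exact hL.label_in_other_eq hY (hw.head ⟨he, hf₁⟩) hf
  exact (key f₁ hf₁ h₁).symm.trans (key f₂ hf₂ h₂)

lemma out_eq_of_three (hL : IsLocalCompass D L) (he₁ : D.FeedsJoin e₁) (he₂ : D.FeedsJoin e₂)
    (he₃ : D.FeedsJoin e₃) (h₁ : e₁.1 = m) (h₂ : e₂.1 = m) (h₃ : e₃.1 = m) :
    e₁ = e₂ ∨ e₁ = e₃ ∨ e₂ = e₃ := by
  obtain ⟨Y₁, hY₁⟩ := hL.exists_label_out_eq he₁
  obtain ⟨Y₂, hY₂⟩ := hL.exists_label_out_eq he₂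
  obtain ⟨Y₃, hY₃⟩ := hL.exists_label_out_eq he₃
  subst h₁
  rw [h₂] at hY₂
  rw [h₃] at hY₃
  rcases YDir.eq_or_eq_or_eq Y₁ Y₂ Y₃ with rfl | rfl | rfl
  exacts [.inl (hY₁.symm.trans hY₂), .inr (.inl (hY₁.symm.trans hY₃)),
    .inr (.inr (hY₂.symm.trans hY₃))]

lemma in_eq_of_three (hL : IsLocalCompass D L) (he₁ : D.FedByFork e₁) (he₂ : D.FedByFork e₂)
    (he₃ : D.FedByFork e₃) (h₁ : e₁.2 = m) (h₂ : e₂.2 = m) (h₃ : e₃.2 = m) :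
    e₁ = e₂ ∨ e₁ = e₃ ∨ e₂ = e₃ := by
  obtain ⟨Y₁, hY₁⟩ := hL.exists_label_in_eq he₁
  obtain ⟨Y₂, hY₂⟩ := hL.exists_label_in_eq he₂
  obtain ⟨Y₃, hY₃⟩ := hL.exists_label_in_eq he₃
  subst h₁
  rw [h₂] at hY₂
  rw [h₃] at hY₃
  rcases YDir.eq_or_eq_or_eq Y₁ Y₂ Y₃ with rfl | rfl | rfl
  exacts [.inl (hY₁.symm.trans hY₂), .inr (.inl (hY₁.symm.trans hY₃)),
    .inr (.inr (hY₂.symm.trans hY₃))]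

theorem not_transversal_bifurcation (hL : IsLocalCompass D L)
    (hbif : Bifurcation D e₁ e₂ e₃) :
    ¬ (Transversal D e₁ ∧ Transversal D e₂ ∧ Transversal D e₃) := by
  rintro ⟨t₁, t₂, t₃⟩
  have hT : ∀ e, Transversal D e → D.FedByFork e ∧ D.FeedsJoin e :=
    fun _ => (transversal_iff hL.1 hL.2.2.2.1).1
  obtain ⟨⟨F₁, J₁⟩, ⟨F₂, J₂⟩, ⟨F₃, J₃⟩⟩ := And.intro (hT _ t₁) (And.intro (hT _ t₂) (hT _ t₃))
  obtain ⟨-, -, -, n₁₂, n₁₃, n₂₃, v, h₁, h₂, h₃⟩ := hbif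
  rcases h₁ with h₁ | h₁ <;> rcases h₂ with h₂ | h₂ <;> rcases h₃ with h₃ | h₃
  · rcases hL.out_eq_of_three J₁ J₂ J₃ h₁.symm h₂.symm h₃.symm with h | h | h
    exacts [n₁₂ h, n₁₃ h, n₂₃ h]
  · exact n₁₂ (hL.out_eq_of_fedByFork_in F₃ J₁ J₂ (h₁.symm.trans h₃) (h₂.symm.trans h₃))
  · exact n₁₃ (hL.out_eq_of_fedByFork_in F₂ J₁ J₃ (h₁.symm.trans h₂) (h₃.symm.trans h₂))
  · exact n₂₃ (hL.in_eq_of_feedsJoin_out J₁ F₂ F₃ (h₂.symm.trans h₁) (h₃.symm.trans h₁))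
  · exact n₂₃ (hL.out_eq_of_fedByFork_in F₁ J₂ J₃ (h₂.symm.trans h₁) (h₃.symm.trans h₁))
  · exact n₁₃ (hL.in_eq_of_feedsJoin_out J₂ F₁ F₃ (h₁.symm.trans h₂) (h₃.symm.trans h₂))
  · exact n₁₂ (hL.in_eq_of_feedsJoin_out J₃ F₁ F₂ (h₁.symm.trans h₃) (h₂.symm.trans h₃))
  · rcases hL.in_eq_of_three F₁ F₂ F₃ h₁.symm h₂.symm h₃.symm with h | h | h
    exacts [n₁₂ h, n₁₃ h, n₂₃ h]

theorem isKGraph (hL : IsLocalCompass D L) : IsKGraph D :=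
  let ⟨hor, _, hwc, hasem, hwef, hinner, _⟩ := hL
  ⟨hor, hwc, hasem, hwef, hinner, fun _ _ _ => hL.not_transversal_bifurcation⟩

end IsLocalCompass

def IsEndpoint (v : ℕ) (e : ℕ × ℕ) : Prop := v = e.1 ∨ v = e.2

namespace DG

variable {D : DG} {S : Finset (ℕ × ℕ)} {e₀ : ℕ × ℕ} {y : ℕ}

def withEdges (D : DG) (S : Finset (ℕ × ℕ)) : DG := ⟨D.verts, S⟩

lemma IsOriented.withEdges (hor : D.IsOriented) (hS : S ⊆ D.edges) :
    (D.withEdges S).IsOriented :=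
  ⟨fun e he => hor.1 e (hS he), fun e he => hor.2.1 e (hS he),
    fun a b h h' => hor.2.2.1 a b (hS h) (hS h'), hor.2.2.2⟩

lemma Asemicyclic.withEdges (hasem : D.Asemicyclic) (hS : S ⊆ D.edges) :
    (D.withEdges S).Asemicyclic := fun l ⟨h₁, h₂, h₃, h₄, h₅⟩ =>
  hasem l ⟨h₁, h₂, h₃, h₄, h₅.imp fun _ _ h => h.imp (@hS _) (@hS _)⟩

/-- A longest semipath ends in a vertex met by a single edge. -/
lemma exists_leaf (hor : D.IsOriented) (hasem : D.Asemicyclic) (hne : D.edges.Nonempty) :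
    ∃ e ∈ D.edges, ∃ y, IsEndpoint y e ∧ ∀ f ∈ D.edges, IsEndpoint y f → f = e := by
  by_contra! hno
  have long : ∀ n, ∃ y p t, D.IsSemipath (y :: p :: t) ∧ n ≤ t.length := by
    intro n
    induction n with
    | zero =>
      obtain ⟨⟨a, b⟩, hab⟩ := hne
      exact ⟨a, b, [], (hor.isPath_pair hab).isSemipath, le_rfl⟩
    | succ n ih =>
      obtain ⟨y, p, t, hs, hn⟩ := ih
      have hyp : D.semiAdj y p := (List.isChain_cons_cons.1 hs.2.2.2).1
      have hc : connEdge D y p ∈ D.edges := by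
        unfold connEdge
        split_ifs with h
        exacts [h, hyp.resolve_left h]
      obtain ⟨⟨f₁, f₂⟩, hf, hyf, hfc⟩ :=
        hno _ hc y (by unfold connEdge IsEndpoint; split_ifs <;> simp)
      obtain ⟨z, hzy, hzp⟩ : ∃ z, D.semiAdj z y ∧ z ≠ p := by
        rcases hyf with rfl | rfl
        · refine ⟨f₂, Or.inr hf, ?_⟩
          rintro rfl
          exact hfc (by simp [connEdge, hf])
        · refine ⟨f₁, Or.inl hf, ?_⟩
          rintro rfl
          exact hfc (by simp [connEdge, hor.not_mem_swap hf])
      exact ⟨z, y, p :: t, hasem.isSemipath_cons hor hs hzy (by simpa using hzp.symm),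
        by simp; omega⟩
  obtain ⟨y, p, t, hs, hn⟩ := long D.verts.card
  have := hs.length_le
  simp at this
  omega

lemma eq_of_isEndpoint_of_leaf (hbif : ∀ e₁ e₂ e₃, ¬ Bifurcation D e₁ e₂ e₃)
    (he₀ : e₀ ∈ D.edges) (hy : IsEndpoint y e₀) (hleaf : ∀ f ∈ D.edges, IsEndpoint y f → f = e₀)
    {f f' : ℕ × ℕ} {v v' : ℕ} (hf : f ∈ D.edges.erase e₀) (hf' : f' ∈ D.edges.erase e₀)
    (hv₀ : IsEndpoint v e₀) (hv : IsEndpoint v f) (hv₀' : IsEndpoint v' e₀)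
    (hv' : IsEndpoint v' f') : f = f' := by
  obtain ⟨hfe, hf⟩ := Finset.mem_erase.1 hf
  obtain ⟨hfe', hf'⟩ := Finset.mem_erase.1 hf'
  have hvy : v ≠ y := by rintro rfl; exact hfe (hleaf f hf hv)
  have hvy' : v' ≠ y := by rintro rfl; exact hfe' (hleaf f' hf' hv')
  obtain rfl : v = v' := by
    rcases hy with rfl | rfl <;> rcases hv₀ with rfl | rfl <;> rcases hv₀' with rfl | rfl <;>
      first | rfl | exact (hvy rfl).elim | exact (hvy' rfl).elim
  by_contra hff
  exact hbif e₀ f f' ⟨he₀, hf, hf', hfe.symm, hfe'.symm, hff, v, hv₀, hv, hv'⟩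

lemma exists_color_of_unique (χ : ℕ × ℕ → YDir) (e₀ : ℕ × ℕ) {F : Finset (ℕ × ℕ)}
    (hu : ∀ f ∈ F, ∀ f' ∈ F, ∀ v v', IsEndpoint v e₀ → IsEndpoint v f → IsEndpoint v' e₀ →
      IsEndpoint v' f' → f = f') :
    ∃ c : YDir, ∀ f ∈ F, ∀ v, IsEndpoint v e₀ → IsEndpoint v f →
      (c = χ f ↔ e₀.2 = f.1 ∨ f.2 = e₀.1) := by
  by_cases hm : ∃ e₁ ∈ F, ∃ v, IsEndpoint v e₀ ∧ IsEndpoint v e₁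
  · obtain ⟨e₁, he₁, v₁, hv₀₁, hv₁⟩ := hm
    refine ⟨if e₀.2 = e₁.1 ∨ e₁.2 = e₀.1 then χ e₁ else (χ e₁).other, fun f hf v hv₀ hv => ?_⟩
    obtain rfl := hu e₁ he₁ f hf v₁ v hv₀₁ hv₁ hv₀ hv
    split_ifs with h
    · simp [h]
    · simp [h, YDir.other_ne]
  · exact ⟨.N, fun f hf v hv₀ hv => (hm ⟨f, hf, v, hv₀, hv⟩).elim⟩

/-- Remove an edge at a leaf, colour the rest, and colour the removed edge according to the at
most one other edge it meets. -/
theorem exists_coloring (hor : D.IsOriented) (hasem : D.Asemicyclic)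
    (hbif : ∀ e₁ e₂ e₃, ¬ Bifurcation D e₁ e₂ e₃) :
    ∃ χ : ℕ × ℕ → YDir, ∀ e ∈ D.edges, ∀ f ∈ D.edges, e ≠ f → ∀ v, IsEndpoint v e →
      IsEndpoint v f → (χ e = χ f ↔ e.2 = f.1 ∨ f.2 = e.1) := by
  classical
  obtain ⟨n, hn⟩ : ∃ n, D.edges.card = n := ⟨_, rfl⟩
  induction n generalizing D with
  | zero =>
    refine ⟨fun _ => .N, fun e he => ?_⟩
    simp [Finset.card_eq_zero.1 hn] at he
  | succ n ih =>
    obtain ⟨e₀, he₀, y, hy, hleaf⟩ := exists_leaf hor hasem (Finset.card_pos.1 (by omega))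
    have hsub : D.edges.erase e₀ ⊆ D.edges := Finset.erase_subset _ _
    obtain ⟨χ, hχ⟩ := ih (hor.withEdges hsub) (hasem.withEdges hsub)
      (fun e₁ e₂ e₃ h => hbif e₁ e₂ e₃ ⟨hsub h.1, hsub h.2.1, hsub h.2.2.1, h.2.2.2⟩)
      (by rw [withEdges, Finset.card_erase_of_mem he₀, hn]; rfl)
    obtain ⟨c, hc⟩ := exists_color_of_unique χ e₀ fun f hf f' hf' _ _ =>
      eq_of_isEndpoint_of_leaf hbif he₀ hy hleaf hf hf'
    refine ⟨Function.update χ e₀ c, fun e he f hf hef v hve hvf => ?_⟩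
    by_cases he' : e = e₀
    · subst he'
      rw [Function.update_self, Function.update_of_ne (Ne.symm hef)]
      exact hc f (Finset.mem_erase.2 ⟨Ne.symm hef, hf⟩) v hve hvf
    by_cases hf' : f = e₀
    · subst hf'
      rw [Function.update_self, Function.update_of_ne hef, eq_comm, or_comm]
      exact hc e (Finset.mem_erase.2 ⟨hef, he⟩) v hvf hve
    rw [Function.update_of_ne he', Function.update_of_ne hf']
    exact hχ e (Finset.mem_erase.2 ⟨he', he⟩) f (Finset.mem_erase.2 ⟨hf', hf⟩) hef v hve hvf

end DG

lemma Finset.exists_mem_eq_and_ne {α : Type*} {C : Finset α} (hC : C.Nonempty) (P Q : α → Prop)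
    (hP : ∀ x ∈ C, ∀ y ∈ C, P x → P y → x = y) (hQ : ∀ x ∈ C, ∀ y ∈ C, Q x → Q y → x = y)
    (hPQ : 2 ≤ C.card → ∀ x ∈ C, P x → ¬ Q x) :
    ∃ y ∈ C, (∀ x ∈ C, P x → y = x) ∧ (2 ≤ C.card → ∀ x ∈ C, Q x → y ≠ x) := by
  by_cases hp : ∃ x ∈ C, P x
  · obtain ⟨x, hx, hPx⟩ := hp
    exact ⟨x, hx, fun y hy hPy => hP x hx y hy hPx hPy, fun hcard y hy hQy hxy =>
      hPQ hcard x hx hPx (hxy ▸ hQy)⟩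
  by_cases hq : 2 ≤ C.card ∧ ∃ x ∈ C, Q x
  · obtain ⟨hcard, x, hx, hQx⟩ := hq
    obtain ⟨y, hy, hyx⟩ := C.exists_mem_ne hcard x
    exact ⟨y, hy, fun z hz hPz => (hp ⟨z, hz, hPz⟩).elim, fun _ z hz hQz => by
      rwa [hQ z hz x hx hQz hQx]⟩
  obtain ⟨y, hy⟩ := hC
  exact ⟨y, hy, fun z hz hPz => (hp ⟨z, hz, hPz⟩).elim, fun hcard z hz hQz =>
    (hq ⟨hcard, z, hz, hQz⟩).elim⟩

lemma exists_separated_choice {α : Type*} [Nonempty α] (C : Finset α) (T : α → Prop) (χ : α → YDir)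
    (hχ : ∀ x ∈ C, ∀ y ∈ C, T x → T y → χ x = χ y → x = y) :
    ∃ g : YDir → α, (C.Nonempty → ∀ Y, g Y ∈ C) ∧ (∀ x ∈ C, T x → g (χ x) = x) ∧
      (2 ≤ C.card → g .N ≠ g .S) := by
  rcases C.eq_empty_or_nonempty with rfl | hC
  · exact ⟨fun _ => Classical.arbitrary α, by simp, by simp, by simp⟩
  have hcol : ∀ Y, ∀ x ∈ C, ∀ y ∈ C, T x ∧ χ x = Y → T y ∧ χ y = Y → x = y :=
    fun Y x hx y hy h₁ h₂ => hχ x hx y hy h₁.1 h₂.1 (h₁.2.trans h₂.2.symm)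
  obtain ⟨gN, hgN, hN, hNS⟩ := Finset.exists_mem_eq_and_ne hC (fun x => T x ∧ χ x = .N)
    (fun x => T x ∧ χ x = .S) (hcol .N) (hcol .S) fun _ _ _ h₁ h₂ => by
      rw [h₁.2] at h₂; cases h₂.2
  obtain ⟨gS, hgS, hS, hSN⟩ := Finset.exists_mem_eq_and_ne hC (fun x => T x ∧ χ x = .S)
    (· = gN) (hcol .S) (fun _ _ _ _ h₁ h₂ => h₁.trans h₂.symm)
    fun hcard x hx h₁ h₂ => hNS hcard x hx h₁ h₂.symm
  refine ⟨fun | .N => gN | .S => gS, fun _ Y => ?_, fun x hx hT => ?_,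
    fun hcard => (hSN hcard gN hgN rfl).symm⟩
  · cases Y
    exacts [hgN, hgS]
  · rcases hc : χ x
    exacts [hN x hx ⟨hT, hc⟩, hS x hx ⟨hT, hc⟩]

namespace DG

variable {D : DG} {χ : ℕ × ℕ → YDir} {e f : ℕ × ℕ}

lemma exists_transversal_coloring (hor : D.IsOriented) (hasem : D.Asemicyclic)
    (hbif : ∀ e₁ e₂ e₃, Bifurcation D e₁ e₂ e₃ →
      ¬ (Transversal D e₁ ∧ Transversal D e₂ ∧ Transversal D e₃)) :
    ∃ χ : ℕ × ℕ → YDir,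
      (∀ e f, Transversal D e → Transversal D f → e.2 = f.1 → χ e = χ f) ∧
      (∀ e f, Transversal D e → Transversal D f → e.1 = f.1 → χ e = χ f → e = f) ∧
      (∀ e f, Transversal D e → Transversal D f → e.2 = f.2 → χ e = χ f → e = f) := by
  classical
  have hS : D.edges.filter (Transversal D) ⊆ D.edges := Finset.filter_subset _ _
  have hT : ∀ {e}, e ∈ (D.withEdges (D.edges.filter (Transversal D))).edges → Transversal D e :=
    fun h => (Finset.mem_filter.1 h).2
  obtain ⟨χ, hχ⟩ := exists_coloring (hor.withEdges hS) (hasem.withEdges hS)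
    fun e₁ e₂ e₃ h => hbif e₁ e₂ e₃ ⟨hS h.1, hS h.2.1, hS h.2.2.1, h.2.2.2⟩
      ⟨hT h.1, hT h.2.1, hT h.2.2.1⟩
  have hχ' : ∀ e f, Transversal D e → Transversal D f → e ≠ f → ∀ v, IsEndpoint v e →
      IsEndpoint v f → (χ e = χ f ↔ e.2 = f.1 ∨ f.2 = e.1) :=
    fun e f he hf => hχ e (Finset.mem_filter.2 ⟨he.1, he⟩) f (Finset.mem_filter.2 ⟨hf.1, hf⟩)
  refine ⟨χ, fun e f he hf h => ?_, fun e f he hf h hc => ?_, fun e f he hf h hc => ?_⟩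
  · refine (hχ' e f he hf ?_ _ (.inr h.symm) (.inl rfl)).2 (.inl h)
    rintro rfl
    exact hor.ne he.1 h.symm
  · by_contra hef
    rcases (hχ' e f he hf hef _ (.inl h.symm) (.inl rfl)).1 hc with h' | h'
    exacts [hor.ne he.1 (h.trans h'.symm), hor.ne hf.1 (h'.trans h).symm]
  · by_contra hef
    rcases (hχ' e f he hf hef _ (.inr h.symm) (.inr rfl)).1 hc with h' | h'
    exacts [hor.ne hf.1 (h'.symm.trans h), hor.ne he.1 (h'.symm.trans h.symm)]

lemma eq_of_not_isFork {a b : ℕ} (ha : ¬ D.IsFork a) (hab : (a, b) ∈ D.edges)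
    (he : e ∈ D.edges) (he₁ : e.1 = a) : e = (a, b) := by
  obtain ⟨x, y⟩ := e
  obtain rfl : x = a := he₁
  by_contra hne
  exact ha ⟨y, b, fun h => hne (h ▸ rfl), he, hab⟩

lemma eq_of_not_isJoin {c d : ℕ} (hd : ¬ D.IsJoin d) (hcd : (c, d) ∈ D.edges)
    (he : e ∈ D.edges) (he₂ : e.2 = d) : e = (c, d) := by
  obtain ⟨x, y⟩ := e
  obtain rfl : y = d := he₂
  by_contra hne
  exact hd ⟨x, c, fun h => hne (h ▸ rfl), he, hcd⟩

lemma eq_color_of_walk (hor : D.IsOriented) (hasem : D.Asemicyclic)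
    (hC : ∀ e f, Transversal D e → Transversal D f → e.2 = f.1 → χ e = χ f)
    (hF : D.FedByFork e) (hw : ReflTransGen D.NextEdge e f) (hJ : D.FeedsJoin f) :
    χ e = χ f := by
  induction hw with
  | refl => rfl
  | @tail f g hw hs ih =>
    have hJf : D.FeedsJoin f := hJ.of_walk (mem_of_walk hF.mem hw) (.single hs)
    exact (ih hJf).trans (hC f g ((transversal_iff hor hasem).2 ⟨hF.walk hw, hJf⟩)
      ((transversal_iff hor hasem).2 ⟨hF.walk (hw.tail hs), hJ⟩) hs.2)

/-- A path from a non-fork or to a non-join is decent because the label there is forced; a path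
from a fork to a join consists of transversal edges of a single colour. -/
lemma decent_of_labels (hor : D.IsOriented) (hasem : D.Asemicyclic) {L : Lab}
    (hC : ∀ e f, Transversal D e → Transversal D f → e.2 = f.1 → χ e = χ f)
    (hout : ∀ a b Y, (a, b) ∈ D.edges → L a Y .E ∈ D.edges ∧ (L a Y .E).1 = a)
    (hin : ∀ c d Y, (c, d) ∈ D.edges → L d Y .W ∈ D.edges ∧ (L d Y .W).2 = d)
    (hTout : ∀ e, Transversal D e → L e.1 (χ e) .E = e)
    (hTin : ∀ e, Transversal D e → L e.2 (χ e).other .W = e)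
    (l : List ℕ) (hl : D.IsPath l) (Y : YDir) : Ydecent L Y l := by
  rintro a b t rfl
  obtain ⟨d, c, t', hr⟩ := exists_reverse_eq_cons_cons a b t
  have hab : (a, b) ∈ D.edges := (List.isChain_cons_cons.1 hl.2.2.2).1
  have hw := walk_of_isPath hl hr
  have hcd : (c, d) ∈ D.edges := mem_of_walk hab hw
  by_cases ha : D.IsFork a
  swap
  · exact .inl (eq_of_not_isFork ha hab (hout a b Y hab).1 (hout a b Y hab).2)
  by_cases hd : D.IsJoin d
  swap
  · exact .inr ⟨c, d, t', hr, eq_of_not_isJoin hd hcd (hin c d Y hcd).1 (hin c d Y hcd).2⟩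
  have hF : D.FedByFork (a, b) := ⟨(a, b), hab, ha, .refl⟩
  have hJ : D.FeedsJoin (c, d) := ⟨hcd, (c, d), hd, .refl⟩
  have hχ := eq_color_of_walk hor hasem hC hF hw hJ
  rcases Y.eq_or_eq_other (χ (a, b)) with rfl | rfl
  · exact .inl (hTout _ ((transversal_iff hor hasem).2 ⟨hF, hJ.of_walk hab hw⟩))
  · refine .inr ⟨c, d, t', hr, ?_⟩
    rw [hχ]
    exact hTin _ ((transversal_iff hor hasem).2 ⟨hF.walk hw, hJ⟩)

end DG

namespace IsKGraph

open DG

theorem exists_localCompass {D : DG} (hK : IsKGraph D) : ∃ L : Lab, IsLocalCompass D L := by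
  classical
  obtain ⟨hor, hwc, hasem, hwef, hinner, hbif⟩ := hK
  obtain ⟨χ, hC₁, hC₂, hC₃⟩ := exists_transversal_coloring hor hasem hbif
  choose gOut hOutMem hOutT hOutSep using fun a => exists_separated_choice
    (D.edges.filter fun e => e.1 = a) (Transversal D) χ fun x hx y hy hTx hTy =>
      hC₂ x y hTx hTy ((Finset.mem_filter.1 hx).2.trans (Finset.mem_filter.1 hy).2.symm)
  choose gIn hInMem hInT hInSep using fun a => exists_separated_choice
    (D.edges.filter fun e => e.2 = a) (Transversal D) (fun e => (χ e).other)
      fun x hx y hy hTx hTy hc => hC₃ x y hTx hTy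
        ((Finset.mem_filter.1 hx).2.trans (Finset.mem_filter.1 hy).2.symm) (YDir.other_inj.1 hc)
  have hout : ∀ a b Y, (a, b) ∈ D.edges → gOut a Y ∈ D.edges ∧ (gOut a Y).1 = a :=
    fun a b Y hab => Finset.mem_filter.1 (hOutMem a ⟨(a, b), Finset.mem_filter.2 ⟨hab, rfl⟩⟩ Y)
  have hin : ∀ c d Y, (c, d) ∈ D.edges → gIn d Y ∈ D.edges ∧ (gIn d Y).2 = d :=
    fun c d Y hcd => Finset.mem_filter.1 (hInMem d ⟨(c, d), Finset.mem_filter.2 ⟨hcd, rfl⟩⟩ Y)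
  have hdec := decent_of_labels (L := fun a Y => pick (gIn a Y) (gOut a Y)) hor hasem hC₁
    hout hin (fun e he => hOutT e.1 e (Finset.mem_filter.2 ⟨he.1, rfl⟩) he)
    (fun e he => hInT e.2 e (Finset.mem_filter.2 ⟨he.1, rfl⟩) he)
  refine ⟨_, hor, ?_, hwc, hasem, hwef, hinner, fun a _ => ⟨hInSep a, hOutSep a⟩,
    fun l hl => ⟨hdec l hl _, hdec l hl _⟩⟩
  rintro a ⟨-, ⟨c, hc⟩, ⟨b, hb⟩⟩ Y
  exact ⟨(hin c a Y hc).1, (hin c a Y hc).2, (hout a b Y hb).1, (hout a b Y hb).2⟩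

end IsKGraph

theorem local_iff_K_general (D : DG) :
    (∃ L : Lab, IsLocalCompass D L) ↔ IsKGraph D :=
  ⟨fun ⟨_, hL⟩ => hL.isKGraph, IsKGraph.exists_localCompass⟩

/-- Proposition 5.2: an oriented graph is a local K-graph iff it is a
K-graph. -/
theorem local_iff_K (D : DG) (hD : D.IsOriented) :
    (∃ L : Lab, IsLocalCompass D L) ↔ IsKGraph D :=
  local_iff_K_general D

end PluralCuts
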